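/- Let C be a weak coring in a symmetric monoidal closed category 𝒞, with counit ε : C ⟶ 𝟙 and comultiplication Δ : C ⟶ C ⊗ C. Then for every object t of 𝒞, the object C ⊗ t is a zero object if and only if the internal hom (ihom C).obj t is a zero object. -/

import Mathlib

/-!
The right counit law makes `C ⊗ t` a retract of `C ⊗ [C, t]`, and the left counit law (for
`Δ ≫ β`, which the braiding provides) makes `[C, t]` a retract of `[C, C ⊗ t]`. Since `C ⊗ -`
is a left adjoint and `[C, -]` a right adjoint, both preserve zero objects, and a retract of a
zero object is zero.
-/

open CategoryTheory CategoryTheory.Limits CategoryTheory.MonoidalCategory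

namespace CategoryTheory

theorem Retract.isZero {𝒞 : Type*} [Category 𝒞] {X Y : 𝒞} (h : Retract X Y) (hY : IsZero Y) :
    IsZero X where
  unique_to Z := ⟨⟨⟨h.i ≫ hY.to_ Z⟩, fun f => by
    rw [← h.retract_assoc f, hY.eq_of_src (h.r ≫ f) (hY.to_ Z)]; rfl⟩⟩
  unique_from Z := ⟨⟨⟨hY.from_ Z ≫ h.r⟩, fun f => by
    rw [← Category.comp_id f, ← h.retract, ← Category.assoc,
      hY.eq_of_tgt (f ≫ h.i) (hY.from_ Z)]; rfl⟩⟩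

section

variable {C D : Type*} [Category C] [Category D] [HasZeroObject D]

theorem Functor.isZero_obj_of_isLeftAdjoint (F : C ⥤ D) [F.IsLeftAdjoint] {X : C}
    (hX : IsZero X) : IsZero (F.obj X) :=
  (isZero_zero D).of_iso ((isZero_zero D).isoIsInitial (hX.isInitial.isInitialObj F X)).symm

theorem Functor.isZero_obj_of_isRightAdjoint (F : C ⥤ D) [F.IsRightAdjoint] {X : C}
    (hX : IsZero X) : IsZero (F.obj X) :=
  (isZero_zero D).of_iso ((isZero_zero D).isoIsTerminal (hX.isTerminal.isTerminalObj F X)).symm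

end

end CategoryTheory

namespace CategoryTheory.MonoidalCategory

variable {𝒞 : Type*} [Category 𝒞] [MonoidalCategory 𝒞] {C : 𝒞} {ε : C ⟶ 𝟙_ 𝒞} {Δ : C ⟶ C ⊗ C}

theorem comul_whiskerRight_associator_whiskerLeft_counit
    (hΔ : Δ ≫ (C ◁ ε) ≫ (ρ_ C).hom = 𝟙 C) (X : 𝒞) :
    (Δ ▷ X) ≫ (α_ C C X).hom ≫ (C ◁ ((ε ▷ X) ≫ (λ_ X).hom)) = 𝟙 (C ⊗ X) := by
  rw [whiskerLeft_comp, ← associator_naturality_middle_assoc, triangle,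
    ← comp_whiskerRight_assoc, ← comp_whiskerRight, Category.assoc, hΔ, id_whiskerRight]

theorem comul_whiskerRight_associator_whiskerLeft_comp_counit
    (hΔ : Δ ≫ (ε ▷ C) ≫ (λ_ C).hom = 𝟙 C) {X Y : 𝒞} (f : C ⊗ X ⟶ Y) :
    (Δ ▷ X) ≫ (α_ C C X).hom ≫ (C ◁ f) ≫ (ε ▷ Y) ≫ (λ_ Y).hom = f := by
  rw [whisker_exchange_assoc, leftUnitor_naturality, ← associator_naturality_left_assoc,
    leftUnitor_tensor_hom, Category.assoc, Iso.hom_inv_id_assoc, ← comp_whiskerRight_assoc,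
    ← comp_whiskerRight_assoc, Category.assoc, hΔ, id_whiskerRight, Category.id_comp]

theorem comul_braiding_counit_left [BraidedCategory 𝒞] (hΔ : Δ ≫ (C ◁ ε) ≫ (ρ_ C).hom = 𝟙 C) :
    (Δ ≫ (β_ C C).hom) ≫ (ε ▷ C) ≫ (λ_ C).hom = 𝟙 C := by
  rw [Category.assoc, ← BraidedCategory.braiding_naturality_right_assoc, braiding_leftUnitor, hΔ]

end CategoryTheory.MonoidalCategory

namespace CategoryTheory.MonoidalClosed

variable {𝒞 : Type*} [Category 𝒞] [MonoidalCategory 𝒞] [MonoidalClosed 𝒞]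
  {C : 𝒞} {ε : C ⟶ 𝟙_ 𝒞} {Δ : C ⟶ C ⊗ C}

def tensorRetractTensorIhom (hΔ : Δ ≫ (C ◁ ε) ≫ (ρ_ C).hom = 𝟙 C) (t : 𝒞) :
    Retract (C ⊗ t) (C ⊗ (ihom C).obj t) where
  i := C ◁ curry ((ε ▷ t) ≫ (λ_ t).hom)
  r := (Δ ▷ _) ≫ (α_ C C _).hom ≫ (C ◁ (ihom.ev C).app t)
  retract := by
    rw [whisker_exchange_assoc, associator_naturality_right_assoc, ← whiskerLeft_comp,
      ← uncurry_eq, uncurry_curry, comul_whiskerRight_associator_whiskerLeft_counit hΔ]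

def ihomRetractIhomTensor (hΔ : Δ ≫ (ε ▷ C) ≫ (λ_ C).hom = 𝟙 C) (t : 𝒞) :
    Retract ((ihom C).obj t) ((ihom C).obj (C ⊗ t)) where
  i := curry ((Δ ▷ _) ≫ (α_ C C _).hom ≫ (C ◁ (ihom.ev C).app t))
  r := (ihom C).map ((ε ▷ t) ≫ (λ_ t).hom)
  retract := by
    rw [← curry_natural_right, Category.assoc, Category.assoc,
      comul_whiskerRight_associator_whiskerLeft_comp_counit hΔ, ← uncurry_id_eq_ev, curry_uncurry]

end CategoryTheory.MonoidalClosed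

theorem weak_coring_tensor_zero_iff_ihom_zero
    {𝒞 : Type*} [Category 𝒞] [MonoidalCategory 𝒞] [SymmetricCategory 𝒞] [MonoidalClosed 𝒞]
    (C : 𝒞) (ε : C ⟶ 𝟙_ 𝒞) (Δ : C ⟶ C ⊗ C)
    (hΔ : Δ ≫ (C ◁ ε) ≫ (ρ_ C).hom = 𝟙 C)
    (t : 𝒞) :
    IsZero (C ⊗ t) ↔ IsZero ((ihom C).obj t) := by
  constructor
  · intro h
    have := h.hasZeroObject
    exact (MonoidalClosed.ihomRetractIhomTensor (comul_braiding_counit_left hΔ) t).isZero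
      ((ihom C).isZero_obj_of_isRightAdjoint h)
  · intro h
    have := h.hasZeroObject
    exact (MonoidalClosed.tensorRetractTensorIhom hΔ t).isZero
      ((tensorLeft C).isZero_obj_of_isLeftAdjoint h)
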